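/- Let $u$ be three times continuously differentiable on a neighborhood of $T$, let $\bar u_{F}=\frac{1}{|F|}\int_F u\,dS$ denote the average of $u$ over a face $F$, and define $K_x(x)=\frac{e_x^2(x-x_0)}{6}-\frac{e_x(x-x_0)^2}{2}+\frac{(x-x_0)^3}{3}$ and $K_z(z)=\frac{e_z^2(z-z_0)}{6}-\frac{e_z(z-z_0)^2}{2}+\frac{(z-z_0)^3}{3}$. Then $e_ye_z\big(\bar u_{F_1}+\bar u_{F_2}-\bar u_{F_5}-\bar u_{F_6}\big)=\frac{1}{6}\left(e_x\int_T \partial_x^2 u\,dV-\frac{e_z^2}{e_x}\int_T \partial_z^2 u\,dV\right)+\frac{1}{e_x}\int_T \partial_x^3 u\,K_x(x)\,dV-\frac{1}{e_x}\int_T \partial_z^3 u\,K_z(z)\,dV$. -/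

import Mathlib

/-!
If `f` is `C³` near `[a, b]` and `K` is the cubic Peano kernel with `K a = K b = 0`, then
`K f'' - (K' - (b - a)² / 6) f' + K'' f` is a primitive of `2 f + (b - a)² / 6 f'' + K f'''`,
whose values at the endpoints give `(b - a) (f a + f b)`.  Applying this on every segment of the
box parallel to the `x`-axis, and on every segment parallel to the `z`-axis, and integrating over
the two remaining variables (Fubini), yields two expressions for the same `2 ∫_T u`; subtracting
them and dividing by `e_x` gives the identity.
-/

open MeasureTheory Set Filter Topology

noncomputable def trapezoidKernel (a b x : ℝ) : ℝ :=
  (b - a) ^ 2 * (x - a) / 6 - (b - a) * (x - a) ^ 2 / 2 + (x - a) ^ 3 / 3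

theorem integral_trapezoid {f : ℝ → ℝ} {V : Set ℝ} {a b : ℝ} (hV : IsOpen V)
    (habV : uIcc a b ⊆ V) (hf : ContDiffOn ℝ 3 f V) :
    ∫ x in a..b, (2 * f x + (b - a) ^ 2 / 6 * deriv^[2] f x
      + deriv^[3] f x * trapezoidKernel a b x) = (b - a) * (f a + f b) := by
  have hf₁ : ContDiffOn ℝ 2 (deriv f) V := hf.deriv_of_isOpen hV (by norm_num)
  have hf₂ : ContDiffOn ℝ 1 (deriv^[2] f) V := hf₁.deriv_of_isOpen hV (by norm_num)
  have hasDeriv {g : ℝ → ℝ} (hg : ContDiffOn ℝ 1 g V) {x : ℝ} (hx : x ∈ uIcc a b) :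
      HasDerivAt g (deriv g x) x :=
    ((hg.differentiableOn one_ne_zero).differentiableAt (hV.mem_nhds (habV hx))).hasDerivAt
  have hprim : ∀ x ∈ uIcc a b, HasDerivAt
      (fun x => trapezoidKernel a b x * deriv^[2] f x
        - ((x - a) ^ 2 - (b - a) * (x - a)) * deriv f x + (2 * (x - a) - (b - a)) * f x)
      (2 * f x + (b - a) ^ 2 / 6 * deriv^[2] f x + deriv^[3] f x * trapezoidKernel a b x) x := by
    intro x hx
    have hid : HasDerivAt (fun x : ℝ => x - a) 1 x := (hasDerivAt_id x).sub_const a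
    have hK : HasDerivAt (trapezoidKernel a b)
        ((b - a) ^ 2 / 6 - (b - a) * (x - a) + (x - a) ^ 2) x :=
      ((((hid.const_mul ((b - a) ^ 2)).div_const 6).fun_sub
        (((hid.fun_pow 2).const_mul (b - a)).div_const 2)).fun_add
          ((hid.fun_pow 3).div_const 3)).congr_deriv (by ring)
    have hK₁ : HasDerivAt (fun x : ℝ => (x - a) ^ 2 - (b - a) * (x - a))
        (2 * (x - a) - (b - a)) x :=
      ((hid.fun_pow 2).fun_sub (hid.const_mul (b - a))).congr_deriv (by ring)
    have hK₂ : HasDerivAt (fun x : ℝ => 2 * (x - a) - (b - a)) 2 x :=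
      ((hid.const_mul 2).sub_const (b - a)).congr_deriv (by ring)
    have hf₃x : HasDerivAt (deriv^[2] f) (deriv^[3] f x) x := hasDeriv hf₂ hx
    have hf₂x : HasDerivAt (deriv f) (deriv^[2] f x) x := hasDeriv (hf₁.of_le (by norm_num)) hx
    have hf₁x : HasDerivAt f (deriv f x) x := hasDeriv (hf.of_le (by norm_num)) hx
    exact (((hK.fun_mul hf₃x).fun_sub (hK₁.fun_mul hf₂x)).fun_add (hK₂.fun_mul hf₁x)).congr_deriv
      (by ring)
  have hcont : ContinuousOn (fun x => 2 * f x + (b - a) ^ 2 / 6 * deriv^[2] f x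
      + deriv^[3] f x * trapezoidKernel a b x) V :=
    ((continuousOn_const.mul hf.continuousOn).add (continuousOn_const.mul hf₂.continuousOn)).add
      ((hf₂.continuousOn_deriv_of_isOpen hV le_rfl).mul (by unfold trapezoidKernel; fun_prop))
  rw [intervalIntegral.integral_eq_sub_of_hasDerivAt hprim (hcont.mono habV).intervalIntegrable]
  simp only [trapezoidKernel]
  ring

section DirectionalDerivative

variable {E F : Type*} [NormedAddCommGroup E] [NormedSpace ℝ E] [NormedAddCommGroup F]
  [NormedSpace ℝ F] {U : Set E} {G : E → F} {v : E}

noncomputable def dirDeriv (v : E) (G : E → F) : E → F := fun p => fderiv ℝ G p v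

theorem ContDiffOn.dirDeriv_of_isOpen {n : ℕ} (hG : ContDiffOn ℝ (n + 1 : ℕ) G U) (hU : IsOpen U) :
    ContDiffOn ℝ n (_root_.dirDeriv v G) U :=
  (hG.fderiv_of_isOpen hU (by norm_cast)).clm_apply contDiffOn_const

theorem ContDiffOn.iterate_dirDeriv_of_isOpen {n : ℕ} (hU : IsOpen U) :
    ∀ {k : ℕ} {G : E → F}, ContDiffOn ℝ (n + k : ℕ) G U →
      ContDiffOn ℝ n ((_root_.dirDeriv v)^[k] G) U
  | 0, _, hG => hG
  | k + 1, _, hG => (hG.dirDeriv_of_isOpen (n := n + k) hU).iterate_dirDeriv_of_isOpen hU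

theorem iterate_deriv_comp_eq_iterate_dirDeriv (hU : IsOpen U) {ℓ : ℝ → E}
    (hℓ : ∀ t, HasDerivAt ℓ v t) :
    ∀ {k : ℕ}, ContDiffOn ℝ k G U → ∀ {t : ℝ}, ℓ t ∈ U →
      deriv^[k] (G ∘ ℓ) t = (dirDeriv v)^[k] G (ℓ t)
  | 0, _, _, _ => rfl
  | k + 1, hG, t, ht => by
    have hev : deriv^[k] (G ∘ ℓ) =ᶠ[𝓝 t] (dirDeriv v)^[k] G ∘ ℓ := by
      have hℓc : Continuous ℓ := continuous_iff_continuousAt.2 fun t => (hℓ t).continuousAt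
      filter_upwards [(hU.preimage hℓc).mem_nhds ht] with s hs
      exact iterate_deriv_comp_eq_iterate_dirDeriv hU hℓ (hG.of_le (by norm_cast; omega)) hs
    have hD : ContDiffOn ℝ 1 ((dirDeriv v)^[k] G) U :=
      ContDiffOn.iterate_dirDeriv_of_isOpen hU (by rwa [add_comm])
    rw [Function.iterate_succ_apply', Function.iterate_succ_apply', hev.deriv_eq]
    exact (((hD.differentiableOn one_ne_zero).differentiableAt
      (hU.mem_nhds ht)).hasFDerivAt.comp_hasDerivAt t (hℓ t)).deriv

end DirectionalDerivative

theorem ContDiffOn.continuousOn_iterate_deriv_fst {E F : Type*} [NormedAddCommGroup E]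
    [NormedSpace ℝ E] [NormedAddCommGroup F] [NormedSpace ℝ F] {U : Set (ℝ × E)}
    {f : ℝ × E → F} {k : ℕ} (hf : ContDiffOn ℝ k f U) (hU : IsOpen U) :
    ContinuousOn (fun p : ℝ × E => deriv^[k] (fun s => f (s, p.2)) p.1) U := by
  refine (ContDiffOn.iterate_dirDeriv_of_isOpen (n := 0) (v := ((1 : ℝ), (0 : E))) hU
    (by simpa using hf)).continuousOn.congr fun p hp => ?_
  exact iterate_deriv_comp_eq_iterate_dirDeriv hU
    (fun t => (hasDerivAt_id t).prodMk (hasDerivAt_const t p.2)) hf (t := p.1) hp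

section Fubini

variable {Y E : Type*} [MeasurableSpace Y] {ν : Measure Y} [SFinite ν] [NormedAddCommGroup E]
  [NormedSpace ℝ E] {a b : ℝ} {t : Set Y}

theorem setIntegral_Icc_prod {f : ℝ × Y → E} (hab : a ≤ b)
    (hf : IntegrableOn f (Icc a b ×ˢ t) (volume.prod ν)) :
    ∫ p in Icc a b ×ˢ t, f p ∂(volume.prod ν) = ∫ x in a..b, ∫ y in t, f (x, y) ∂ν := by
  rw [setIntegral_prod _ hf, intervalIntegral.integral_of_le hab, integral_Icc_eq_integral_Ioc]

theorem setIntegral_Icc_prod_symm {f : ℝ × Y → E} (hab : a ≤ b)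
    (hf : IntegrableOn f (Icc a b ×ˢ t) (volume.prod ν)) :
    ∫ p in Icc a b ×ˢ t, f p ∂(volume.prod ν) = ∫ y in t, (∫ x in a..b, f (x, y)) ∂ν := by
  rw [IntegrableOn, ← Measure.prod_restrict] at hf
  simp only [← Measure.prod_restrict, integral_prod_symm _ hf, intervalIntegral.integral_of_le hab,
    integral_Icc_eq_integral_Ioc]

theorem IntegrableOn.intervalIntegral_prod_right {f : ℝ × Y → E} (hab : a ≤ b)
    (hf : IntegrableOn f (Icc a b ×ˢ t) (volume.prod ν)) :
    IntegrableOn (fun y => ∫ x in a..b, f (x, y)) t ν := by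
  rw [IntegrableOn, ← Measure.prod_restrict] at hf
  rw [IntegrableOn]
  simpa only [intervalIntegral.integral_of_le hab, integral_Icc_eq_integral_Ioc]
    using hf.integral_prod_right

end Fubini

theorem setIntegral_Icc_prod_Icc {E : Type*} [NormedAddCommGroup E] [NormedSpace ℝ E]
    {f : ℝ × ℝ → E} {a b c d : ℝ} (hab : a ≤ b) (hcd : c ≤ d)
    (hf : IntegrableOn f (Icc a b ×ˢ Icc c d)) :
    ∫ p in Icc a b ×ˢ Icc c d, f p = ∫ x in a..b, ∫ y in c..d, f (x, y) := by
  simp only [Measure.volume_eq_prod, setIntegral_Icc_prod hab hf,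
    intervalIntegral.integral_of_le hcd, integral_Icc_eq_integral_Ioc]

theorem setIntegral_Icc_prod_Icc_prod_Icc {E : Type*} [NormedAddCommGroup E] [NormedSpace ℝ E]
    {g : ℝ × ℝ × ℝ → E} {a₁ b₁ a₂ b₂ a₃ b₃ : ℝ} (h₁ : a₁ ≤ b₁) (h₂ : a₂ ≤ b₂) (h₃ : a₃ ≤ b₃)
    (hg : ContinuousOn g (Icc a₁ b₁ ×ˢ Icc a₂ b₂ ×ˢ Icc a₃ b₃)) :
    ∫ p in Icc a₁ b₁ ×ˢ Icc a₂ b₂ ×ˢ Icc a₃ b₃, g p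
      = ∫ x in a₁..b₁, ∫ y in a₂..b₂, ∫ z in a₃..b₃, g (x, y, z) := by
  have hbox : IsCompact (Icc a₁ b₁ ×ˢ Icc a₂ b₂ ×ˢ Icc a₃ b₃) :=
    isCompact_Icc.prod (isCompact_Icc.prod isCompact_Icc)
  rw [Measure.volume_eq_prod, setIntegral_Icc_prod h₁ (hg.integrableOn_compact hbox)]
  refine intervalIntegral.integral_congr fun x hx => setIntegral_Icc_prod_Icc h₂ h₃ ?_
  rw [uIcc_of_le h₁] at hx
  exact (hg.comp (Continuous.prodMk_right x).continuousOn fun q hq => ⟨hx, hq⟩).integrableOn_compact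
    (isCompact_Icc.prod isCompact_Icc)

theorem setIntegral_Icc_prod_Icc_prod_Icc_rotate {E : Type*} [NormedAddCommGroup E]
    [NormedSpace ℝ E] {g : ℝ × ℝ × ℝ → E} {a₁ b₁ a₂ b₂ a₃ b₃ : ℝ} (h₁ : a₁ ≤ b₁) (h₂ : a₂ ≤ b₂)
    (h₃ : a₃ ≤ b₃) (hg : IntegrableOn g (Icc a₃ b₃ ×ˢ Icc a₁ b₁ ×ˢ Icc a₂ b₂)) :
    ∫ p in Icc a₃ b₃ ×ˢ Icc a₁ b₁ ×ˢ Icc a₂ b₂, g p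
      = ∫ x in a₁..b₁, ∫ y in a₂..b₂, ∫ z in a₃..b₃, g (z, x, y) := by
  rw [Measure.volume_eq_prod] at hg ⊢
  rw [setIntegral_Icc_prod_symm h₃ hg,
    setIntegral_Icc_prod_Icc h₁ h₂ (IntegrableOn.intervalIntegral_prod_right h₃ hg)]

theorem setIntegral_trapezoid {E : Type*} [NormedAddCommGroup E] [NormedSpace ℝ E]
    [MeasurableSpace E] [BorelSpace E] {ν : Measure E} [IsFiniteMeasureOnCompacts ν] [SFinite ν]
    {f : ℝ × E → ℝ} {U : Set (ℝ × E)} {t : Set E}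
    {a b : ℝ} (hab : a ≤ b) (ht : IsCompact t) (hU : IsOpen U) (htU : Icc a b ×ˢ t ⊆ U)
    (hf : ContDiffOn ℝ 3 f U) :
    ∫ p in Icc a b ×ˢ t, (2 * f p + (b - a) ^ 2 / 6 * deriv^[2] (fun s => f (s, p.2)) p.1
        + deriv^[3] (fun s => f (s, p.2)) p.1 * trapezoidKernel a b p.1) ∂(volume.prod ν)
      = (b - a) * (∫ y in t, f (a, y) ∂ν + ∫ y in t, f (b, y) ∂ν) := by
  have hcont : ContinuousOn (fun p => 2 * f p
      + (b - a) ^ 2 / 6 * deriv^[2] (fun s => f (s, p.2)) p.1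
      + deriv^[3] (fun s => f (s, p.2)) p.1 * trapezoidKernel a b p.1) U :=
    ((continuousOn_const.mul hf.continuousOn).add (continuousOn_const.mul
      ((hf.of_le (by norm_num)).continuousOn_iterate_deriv_fst hU))).add
      ((hf.continuousOn_iterate_deriv_fst hU).mul (by unfold trapezoidKernel; fun_prop))
  have hface {x : ℝ} (hx : x ∈ Icc a b) : IntegrableOn (fun y => f (x, y)) t ν :=
    (hf.continuousOn.comp (Continuous.prodMk_right x).continuousOn
      fun y hy => htU ⟨hx, hy⟩).integrableOn_compact ht
  rw [setIntegral_Icc_prod_symm hab ((hcont.mono htU).integrableOn_compact (isCompact_Icc.prod ht)),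
    ← integral_add (hface (left_mem_Icc.2 hab)) (hface (right_mem_Icc.2 hab)),
    ← integral_const_mul]
  refine setIntegral_congr_fun ht.measurableSet fun y hy => integral_trapezoid
    (hU.preimage (Continuous.prodMk_left y)) (fun s hs => htU ⟨uIcc_of_le hab ▸ hs, hy⟩) ?_
  exact hf.comp (contDiff_id.prodMk contDiff_const).contDiffOn fun s hs => hs

section Box

variable {u : ℝ → ℝ → ℝ → ℝ} {U : Set (ℝ × ℝ × ℝ)} {x₀ x₁ y₀ y₁ z₀ z₁ : ℝ}

theorem integral_faces_x_eq (hx : x₀ ≤ x₁) (hy : y₀ ≤ y₁) (hz : z₀ ≤ z₁) (hU : IsOpen U)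
    (hBU : Icc x₀ x₁ ×ˢ Icc y₀ y₁ ×ˢ Icc z₀ z₁ ⊆ U)
    (hu : ContDiffOn ℝ 3 (fun p : ℝ × ℝ × ℝ => u p.1 p.2.1 p.2.2) U) :
    (x₁ - x₀) * ((∫ y in y₀..y₁, ∫ z in z₀..z₁, u x₀ y z) + ∫ y in y₀..y₁, ∫ z in z₀..z₁, u x₁ y z)
      = 2 * (∫ x in x₀..x₁, ∫ y in y₀..y₁, ∫ z in z₀..z₁, u x y z)
        + (x₁ - x₀) ^ 2 / 6 * (∫ x in x₀..x₁, ∫ y in y₀..y₁, ∫ z in z₀..z₁,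
            deriv^[2] (fun t => u t y z) x)
        + ∫ x in x₀..x₁, ∫ y in y₀..y₁, ∫ z in z₀..z₁,
            deriv^[3] (fun t => u t y z) x * trapezoidKernel x₀ x₁ x := by
  have hP := setIntegral_trapezoid (ν := volume) hx (isCompact_Icc.prod isCompact_Icc) hU hBU hu
  rw [← Measure.volume_eq_prod] at hP
  dsimp only at hP
  set B := Icc x₀ x₁ ×ˢ Icc y₀ y₁ ×ˢ Icc z₀ z₁
  have hB : IsCompact B := isCompact_Icc.prod (isCompact_Icc.prod isCompact_Icc)
  have h₀ : ContinuousOn (fun p : ℝ × ℝ × ℝ => u p.1 p.2.1 p.2.2) B := hu.continuousOn.mono hBU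
  have h₂ : ContinuousOn (fun p : ℝ × ℝ × ℝ => deriv^[2] (fun t => u t p.2.1 p.2.2) p.1) B :=
    ((hu.of_le (by norm_num) : ContDiffOn ℝ (2 : ℕ) _ U).continuousOn_iterate_deriv_fst hU).mono hBU
  have h₃ : ContinuousOn (fun p : ℝ × ℝ × ℝ =>
      deriv^[3] (fun t => u t p.2.1 p.2.2) p.1 * trapezoidKernel x₀ x₁ p.1) B :=
    (((hu : ContDiffOn ℝ (3 : ℕ) _ U).continuousOn_iterate_deriv_fst hU).mono hBU).mul
      (by unfold trapezoidKernel; fun_prop)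
  have hface {x : ℝ} (hx' : x ∈ Icc x₀ x₁) :
      IntegrableOn (fun q : ℝ × ℝ => u x q.1 q.2) (Icc y₀ y₁ ×ˢ Icc z₀ z₁) :=
    (h₀.comp (Continuous.prodMk_right x).continuousOn fun q hq => ⟨hx', hq⟩).integrableOn_compact
      (isCompact_Icc.prod isCompact_Icc)
  have i₀ := (h₀.integrableOn_compact (μ := volume) hB).const_mul 2
  have i₂ := (h₂.integrableOn_compact (μ := volume) hB).const_mul ((x₁ - x₀) ^ 2 / 6)
  rw [integral_add (i₀.fun_add i₂) (h₃.integrableOn_compact hB), integral_add i₀ i₂,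
    integral_const_mul, integral_const_mul, setIntegral_Icc_prod_Icc_prod_Icc hx hy hz h₀,
    setIntegral_Icc_prod_Icc_prod_Icc hx hy hz h₂, setIntegral_Icc_prod_Icc_prod_Icc hx hy hz h₃,
    setIntegral_Icc_prod_Icc hy hz (hface (left_mem_Icc.2 hx)),
    setIntegral_Icc_prod_Icc hy hz (hface (right_mem_Icc.2 hx))] at hP
  exact hP.symm

theorem integral_faces_z_eq (hx : x₀ ≤ x₁) (hy : y₀ ≤ y₁) (hz : z₀ ≤ z₁) (hU : IsOpen U)
    (hBU : Icc x₀ x₁ ×ˢ Icc y₀ y₁ ×ˢ Icc z₀ z₁ ⊆ U)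
    (hu : ContDiffOn ℝ 3 (fun p : ℝ × ℝ × ℝ => u p.1 p.2.1 p.2.2) U) :
    (z₁ - z₀) * ((∫ x in x₀..x₁, ∫ y in y₀..y₁, u x y z₀) + ∫ x in x₀..x₁, ∫ y in y₀..y₁, u x y z₁)
      = 2 * (∫ x in x₀..x₁, ∫ y in y₀..y₁, ∫ z in z₀..z₁, u x y z)
        + (z₁ - z₀) ^ 2 / 6 * (∫ x in x₀..x₁, ∫ y in y₀..y₁, ∫ z in z₀..z₁,
            deriv^[2] (fun t => u x y t) z)
        + ∫ x in x₀..x₁, ∫ y in y₀..y₁, ∫ z in z₀..z₁,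
            deriv^[3] (fun t => u x y t) z * trapezoidKernel z₀ z₁ z := by
  set rot : ℝ × ℝ × ℝ → ℝ × ℝ × ℝ := fun p => (p.2.1, p.2.2, p.1)
  have hrot : ContDiff ℝ ⊤ rot := by fun_prop
  have hU' : IsOpen (rot ⁻¹' U) := hU.preimage hrot.continuous
  have hu' : ContDiffOn ℝ 3 (fun p : ℝ × ℝ × ℝ => u p.2.1 p.2.2 p.1) (rot ⁻¹' U) :=
    hu.comp (hrot.of_le le_top).contDiffOn fun p hp => hp
  have hBU' : Icc z₀ z₁ ×ˢ Icc x₀ x₁ ×ˢ Icc y₀ y₁ ⊆ rot ⁻¹' U :=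
    fun p ⟨hp₁, hp₂, hp₃⟩ => hBU ⟨hp₂, hp₃, hp₁⟩
  have hP := setIntegral_trapezoid (ν := volume) hz (isCompact_Icc.prod isCompact_Icc) hU' hBU' hu'
  rw [← Measure.volume_eq_prod] at hP
  dsimp only at hP
  set B := Icc z₀ z₁ ×ˢ Icc x₀ x₁ ×ˢ Icc y₀ y₁
  have hB : IsCompact B := isCompact_Icc.prod (isCompact_Icc.prod isCompact_Icc)
  have h₀ : ContinuousOn (fun p : ℝ × ℝ × ℝ => u p.2.1 p.2.2 p.1) B := hu'.continuousOn.mono hBU'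
  have h₂ : ContinuousOn (fun p : ℝ × ℝ × ℝ => deriv^[2] (fun t => u p.2.1 p.2.2 t) p.1) B :=
    ((hu'.of_le (by norm_num) : ContDiffOn ℝ (2 : ℕ) _ _).continuousOn_iterate_deriv_fst
      hU').mono hBU'
  have h₃ : ContinuousOn (fun p : ℝ × ℝ × ℝ =>
      deriv^[3] (fun t => u p.2.1 p.2.2 t) p.1 * trapezoidKernel z₀ z₁ p.1) B :=
    (((hu' : ContDiffOn ℝ (3 : ℕ) _ _).continuousOn_iterate_deriv_fst hU').mono hBU').mul
      (by unfold trapezoidKernel; fun_prop)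
  have hface {z : ℝ} (hz' : z ∈ Icc z₀ z₁) :
      IntegrableOn (fun q : ℝ × ℝ => u q.1 q.2 z) (Icc x₀ x₁ ×ˢ Icc y₀ y₁) :=
    (h₀.comp (Continuous.prodMk_right z).continuousOn fun q hq => ⟨hz', hq⟩).integrableOn_compact
      (isCompact_Icc.prod isCompact_Icc)
  have i₀ := (h₀.integrableOn_compact (μ := volume) hB).const_mul 2
  have i₂ := (h₂.integrableOn_compact (μ := volume) hB).const_mul ((z₁ - z₀) ^ 2 / 6)
  have i₃ := h₃.integrableOn_compact (μ := volume) hB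
  rw [integral_add (i₀.fun_add i₂) i₃, integral_add i₀ i₂,
    integral_const_mul, integral_const_mul,
    setIntegral_Icc_prod_Icc_prod_Icc_rotate hx hy hz (h₀.integrableOn_compact hB),
    setIntegral_Icc_prod_Icc_prod_Icc_rotate hx hy hz (h₂.integrableOn_compact hB),
    setIntegral_Icc_prod_Icc_prod_Icc_rotate hx hy hz i₃,
    setIntegral_Icc_prod_Icc hx hy (hface (left_mem_Icc.2 hz)),
    setIntegral_Icc_prod_Icc hx hy (hface (right_mem_Icc.2 hz))] at hP
  exact hP.symm

end Box

theorem stmt17 (x0 x1 y0 y1 z0 z1 : ℝ) (hx : x0 < x1) (hy : y0 < y1) (hz : z0 < z1)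
    (ex ey ez : ℝ)
    (hex : ex = x1 - x0) (hey : ey = y1 - y0) (hez : ez = z1 - z0)
    -- `u` is three times continuously differentiable on a neighborhood `U` of `T`
    (u : ℝ → ℝ → ℝ → ℝ) (U : Set (ℝ × ℝ × ℝ)) (hU : IsOpen U)
    (hTU : Set.Icc x0 x1 ×ˢ Set.Icc y0 y1 ×ˢ Set.Icc z0 z1 ⊆ U)
    (hu : ContDiffOn ℝ 3 (fun p : ℝ × ℝ × ℝ => u p.1 p.2.1 p.2.2) U)
    (Kx Kz : ℝ → ℝ)
    (hKx : ∀ x : ℝ, Kx x = ex ^ 2 * (x - x0) / 6 - ex * (x - x0) ^ 2 / 2 + (x - x0) ^ 3 / 3)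
    (hKz : ∀ z : ℝ, Kz z = ez ^ 2 * (z - z0) / 6 - ez * (z - z0) ^ 2 / 2 + (z - z0) ^ 3 / 3)
    -- face averages of `u`
    (uF1 uF2 uF5 uF6 : ℝ)
    (huF1 : uF1 = (∫ y in y0..y1, ∫ z in z0..z1, u x0 y z) / (ey * ez))
    (huF2 : uF2 = (∫ y in y0..y1, ∫ z in z0..z1, u x1 y z) / (ey * ez))
    (huF5 : uF5 = (∫ x in x0..x1, ∫ y in y0..y1, u x y z0) / (ex * ey))
    (huF6 : uF6 = (∫ x in x0..x1, ∫ y in y0..y1, u x y z1) / (ex * ey)) :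
    ey * ez * (uF1 + uF2 - uF5 - uF6)
      = 1 / 6 * (ex * (∫ x in x0..x1, ∫ y in y0..y1, ∫ z in z0..z1,
            deriv^[2] (fun t => u t y z) x)
          - ez ^ 2 / ex * (∫ x in x0..x1, ∫ y in y0..y1, ∫ z in z0..z1,
            deriv^[2] (fun r => u x y r) z))
        + 1 / ex * (∫ x in x0..x1, ∫ y in y0..y1, ∫ z in z0..z1,
            deriv^[3] (fun t => u t y z) x * Kx x)
        - 1 / ex * (∫ x in x0..x1, ∫ y in y0..y1, ∫ z in z0..z1,
            deriv^[3] (fun r => u x y r) z * Kz z) := by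
  subst hex hey hez huF1 huF2 huF5 huF6
  obtain rfl : Kx = trapezoidKernel x0 x1 := funext hKx
  obtain rfl : Kz = trapezoidKernel z0 z1 := funext hKz
  have hX := integral_faces_x_eq hx.le hy.le hz.le hU hTU hu
  have hZ := integral_faces_z_eq hx.le hy.le hz.le hU hTU hu
  have hex : x1 - x0 ≠ 0 := (sub_pos.2 hx).ne'
  have hey : y1 - y0 ≠ 0 := (sub_pos.2 hy).ne'
  have hez : z1 - z0 ≠ 0 := (sub_pos.2 hz).ne'
  field_simp
  linear_combination 6 * (hX - hZ)
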